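/- arXiv:2403.06083 — 3 statements merged into one kernel-verified Lean document; each statement's English description precedes it below -/
import Mathlib

section
/- Let θ ∈ (0,1) and let h : ℝ → ℝ satisfy |h(η)| ≤ A e^{−B|η|} for some constants A, B > 0. Then for every x ∈ ℤ, every b ∈ ℝ, every finitely supported ψ : ℤ → ℂ and every n ∈ ℤ, the reduced incommensurate coupled chain Hamiltonian satisfies the covariance relation (H_r(b)(U_xψ))_{n+x} = (H_r(b − x)ψ)_n, i.e. U_x^† H_r(b) U_x = H_r(b − x), where (U_xψ)_n = ψ_{n−x}; in particular all the doubly infinite sums involved converge absolutely. -/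
set_option maxHeartbeats 1000000


/-- The reduced incommensurate coupled chain Hamiltonian:
`(H_r(b)ψ)_n = ψ_{n+1} + ψ_{n−1} + Σ_{n'} Σ_{n''} h(n − (1−θ)n' − b) h(n'' − (1−θ)n' − b) ψ_{n''}`. -/
noncomputable def Hred (θ : ℝ) (h : ℝ → ℝ) (b : ℝ) (ψ : ℤ → ℂ) (n : ℤ) : ℂ :=
  ψ (n + 1) + ψ (n - 1) +
    ∑' n' : ℤ, ∑' n'' : ℤ,
      (h ((n : ℝ) - (1 - θ) * (n' : ℝ) - b) * h ((n'' : ℝ) - (1 - θ) * (n' : ℝ) - b) : ℝ)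
        * ψ n''

lemma summable_exp_neg_abs_int {c : ℝ} (hc : 0 < c) :
    Summable (fun k : ℤ => Real.exp (-c * |(k : ℝ)|)) := by
  have hnat : Summable (fun k : ℕ => Real.exp ((k : ℝ) * (-c))) :=
    Real.summable_exp_nat_mul_iff.mpr (by linarith)
  apply Summable.of_nat_of_neg
  · refine hnat.congr fun k => ?_
    congr 1
    rw [abs_of_nonneg (by positivity)]
    push_cast; ring
  · refine hnat.congr fun k => ?_
    congr 1
    push_cast
    rw [abs_neg, abs_of_nonneg (by positivity)]
    ring

lemma aux_summable (θ : ℝ) (hθ1 : θ < 1) (h : ℝ → ℝ) (A B : ℝ) (hA : 0 < A) (hB : 0 < B)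
    (hdecay : ∀ η : ℝ, |h η| ≤ A * Real.exp (-B * |η|))
    (ψ : ℤ → ℂ) (hψ : (Function.support ψ).Finite) (m b : ℝ) :
    Summable (fun p : ℤ × ℤ =>
      (h (m - (1 - θ) * (p.1 : ℝ) - b) * h ((p.2 : ℝ) - (1 - θ) * (p.1 : ℝ) - b) : ℝ)
        * ψ p.2) := by
  have h1θ : (0 : ℝ) < 1 - θ := by linarith
  set c := B * (1 - θ) with hcdef
  have hc : 0 < c := mul_pos hB h1θ
  have hg : Summable (fun k : ℤ => A * Real.exp (B * |m - b|) * Real.exp (-c * |(k : ℝ)|)) :=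
    (summable_exp_neg_abs_int hc).mul_left _
  have hk : Summable (fun k : ℤ => A * ‖ψ k‖) := by
    apply summable_of_finite_support
    apply hψ.subset
    intro k hk
    simp only [Function.mem_support] at hk ⊢
    intro hzero
    simp [hzero] at hk
  have hprod : Summable (fun p : ℤ × ℤ =>
      (A * Real.exp (B * |m - b|) * Real.exp (-c * |(p.1 : ℝ)|)) * (A * ‖ψ p.2‖)) :=
    hg.mul_of_nonneg hk (fun k => by positivity) (fun k => by positivity)
  apply Summable.of_norm
  refine hprod.of_nonneg_of_le (fun p => norm_nonneg _) fun p => ?_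
  set α := m - (1 - θ) * (p.1 : ℝ) - b with hα
  set β := (p.2 : ℝ) - (1 - θ) * (p.1 : ℝ) - b with hβ
  have hexpα : Real.exp (-B * |α|) ≤ Real.exp (B * |m - b|) * Real.exp (-c * |(p.1 : ℝ)|) := by
    rw [← Real.exp_add]
    apply Real.exp_le_exp.mpr
    have h1 : (1 - θ) * |(p.1 : ℝ)| ≤ |m - b| + |α| := by
      have : (1 - θ) * |(p.1 : ℝ)| = |(m - b) - α| := by
        rw [show (m - b) - α = (1 - θ) * (p.1 : ℝ) by rw [hα]; ring, abs_mul,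
          abs_of_pos h1θ]
      rw [this]
      exact abs_sub _ _
    have := mul_le_mul_of_nonneg_left h1 hB.le
    rw [hcdef]; nlinarith [abs_nonneg (p.1 : ℝ), abs_nonneg α, abs_nonneg (m - b)]
  have hhα : |h α| ≤ A * (Real.exp (B * |m - b|) * Real.exp (-c * |(p.1 : ℝ)|)) :=
    (hdecay α).trans (by
      exact mul_le_mul_of_nonneg_left hexpα hA.le)
  have hhβ : |h β| ≤ A := by
    refine (hdecay β).trans ?_
    nth_rewrite 2 [show A = A * 1 by ring]
    apply mul_le_mul_of_nonneg_left _ hA.le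
    apply Real.exp_le_one_iff.mpr
    have := abs_nonneg β
    nlinarith
  have : ‖((h α * h β : ℝ) : ℂ) * ψ p.2‖ = |h α| * (|h β| * ‖ψ p.2‖) := by
    rw [norm_mul, Complex.norm_real, Real.norm_eq_abs, abs_mul, mul_assoc]
  rw [this]
  have hb1 : |h β| * ‖ψ p.2‖ ≤ A * ‖ψ p.2‖ :=
    mul_le_mul_of_nonneg_right hhβ (norm_nonneg _)
  calc |h α| * (|h β| * ‖ψ p.2‖)
      ≤ (A * (Real.exp (B * |m - b|) * Real.exp (-c * |(p.1 : ℝ)|))) * (A * ‖ψ p.2‖) := by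
        apply mul_le_mul hhα hb1 (by positivity) (by positivity)
    _ = (A * Real.exp (B * |m - b|) * Real.exp (-c * |(p.1 : ℝ)|)) * (A * ‖ψ p.2‖) := by ring

/-- Covariance of the reduced incommensurate coupled chain Hamiltonian under lattice
shifts: if `h` decays exponentially and `ψ` is finitely supported, then all the
doubly infinite sums involved converge absolutely and
`(H_r(b)(U_xψ))_{n+x} = (H_r(b − x)ψ)_n`, i.e. `U_x^† H_r(b) U_x = H_r(b − x)`,
where `(U_xψ)_n = ψ_{n−x}`. -/
theorem Hred_covariance (θ : ℝ) (hθ : θ ∈ Set.Ioo (0 : ℝ) 1)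
    (h : ℝ → ℝ) (A B : ℝ) (hA : 0 < A) (hB : 0 < B)
    (hdecay : ∀ η : ℝ, |h η| ≤ A * Real.exp (-B * |η|))
    (x : ℤ) (b : ℝ) (ψ : ℤ → ℂ) (hψ : (Function.support ψ).Finite) (n : ℤ) :
    Summable (fun p : ℤ × ℤ =>
      (h (((n + x : ℤ) : ℝ) - (1 - θ) * (p.1 : ℝ) - b)
        * h ((p.2 : ℝ) - (1 - θ) * (p.1 : ℝ) - b) : ℝ) * ψ (p.2 - x)) ∧
    Summable (fun p : ℤ × ℤ =>
      (h ((n : ℝ) - (1 - θ) * (p.1 : ℝ) - (b - x))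
        * h ((p.2 : ℝ) - (1 - θ) * (p.1 : ℝ) - (b - x)) : ℝ) * ψ p.2) ∧
    Hred θ h b (fun m => ψ (m - x)) (n + x) = Hred θ h (b - x) ψ n := by
  obtain ⟨hθ0, hθ1⟩ := hθ
  have hψ' : (Function.support (fun m => ψ (m - x))).Finite := by
    have : Function.support (fun m => ψ (m - x)) ⊆ (· + x) '' Function.support ψ := by
      intro k hk
      exact ⟨k - x, hk, by ring⟩
    exact (hψ.image _).subset this
  have S1 : Summable (fun p : ℤ × ℤ =>
      (h (((n + x : ℤ) : ℝ) - (1 - θ) * (p.1 : ℝ) - b)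
        * h ((p.2 : ℝ) - (1 - θ) * (p.1 : ℝ) - b) : ℝ) * ψ (p.2 - x)) :=
    aux_summable θ hθ1 h A B hA hB hdecay (fun m => ψ (m - x)) hψ' _ b
  have S2 : Summable (fun p : ℤ × ℤ =>
      (h ((n : ℝ) - (1 - θ) * (p.1 : ℝ) - (b - x))
        * h ((p.2 : ℝ) - (1 - θ) * (p.1 : ℝ) - (b - x)) : ℝ) * ψ p.2) :=
    aux_summable θ hθ1 h A B hA hB hdecay ψ hψ _ (b - x)
  refine ⟨S1, S2, ?_⟩
  unfold Hred
  congr 1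
  · show ψ (n + x + 1 - x) + ψ (n + x - 1 - x) = ψ (n + 1) + ψ (n - 1)
    rw [show n + x + 1 - x = n + 1 by ring, show n + x - 1 - x = n - 1 by ring]
  · rw [← Summable.tsum_prod' S1 S1.prod_factor, ← Summable.tsum_prod' S2 S2.prod_factor]
    rw [← (Equiv.prodCongr (Equiv.refl ℤ) (Equiv.addRight x)).tsum_eq (fun p : ℤ × ℤ =>
      (h (((n + x : ℤ) : ℝ) - (1 - θ) * (p.1 : ℝ) - b)
        * h ((p.2 : ℝ) - (1 - θ) * (p.1 : ℝ) - b) : ℝ) * ψ (p.2 - x))]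
    apply tsum_congr
    intro p
    simp only [Equiv.prodCongr_apply, Equiv.coe_refl, Prod.map, Equiv.coe_addRight, id]
    have h1 : ((n + x : ℤ) : ℝ) - (1 - θ) * (p.1 : ℝ) - b
        = (n : ℝ) - (1 - θ) * (p.1 : ℝ) - (b - (x : ℝ)) := by push_cast; ring
    have h2 : ((p.2 + x : ℤ) : ℝ) - (1 - θ) * (p.1 : ℝ) - b
        = (p.2 : ℝ) - (1 - θ) * (p.1 : ℝ) - (b - (x : ℝ)) := by push_cast; ring
    rw [h1, h2, show p.2 + x - x = p.2 by ring]
end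

section
/- Let θ ∈ (0,1) and let h : ℝ → ℝ satisfy |h(η)| ≤ A e^{−B|η|} for some constants A, B > 0. Then for every x ∈ ℤ and b ∈ ℝ, the incommensurate coupled chain Hamiltonian satisfies the layer-1 covariance relation H(b + x) = U¹_x H(b) (U¹_x)†: for every pair of finitely supported functions ψ = (ψ¹, ψ²) with ψ¹, ψ² : ℤ → ℂ and all n, m ∈ ℤ, ((H(b + x)ψ)¹)_n = ((H(b)(U¹_{−x}ψ))¹)_{n−x} and ((H(b + x)ψ)²)_m = ((H(b)(U¹_{−x}ψ))²)_m, where U¹_x shifts the first component by x and leaves the second unchanged: ((U¹_xψ)¹)_n = ψ¹_{n−x}, ((U¹_xψ)²)_m = ψ²_m. -/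
/-- First (layer-1) component of the incommensurate coupled chain Hamiltonian:
`((H(b)ψ)¹)_n = ψ¹_{n+1} + ψ¹_{n−1} + Σ_m h(n − (1−θ)m − b) ψ²_m`. -/
noncomputable def Hchain1 (θ : ℝ) (h : ℝ → ℝ) (b : ℝ) (ψ1 ψ2 : ℤ → ℂ) (n : ℤ) : ℂ :=
  ψ1 (n + 1) + ψ1 (n - 1) +
    ∑' m : ℤ, (h ((n : ℝ) - (1 - θ) * (m : ℝ) - b) : ℝ) * ψ2 m

/-- Second (layer-2) component of the incommensurate coupled chain Hamiltonian:
`((H(b)ψ)²)_m = ψ²_{m+1} + ψ²_{m−1} + Σ_n h(n − (1−θ)m − b) ψ¹_n`. -/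
noncomputable def Hchain2 (θ : ℝ) (h : ℝ → ℝ) (b : ℝ) (ψ1 ψ2 : ℤ → ℂ) (m : ℤ) : ℂ :=
  ψ2 (m + 1) + ψ2 (m - 1) +
    ∑' n : ℤ, (h ((n : ℝ) - (1 - θ) * (m : ℝ) - b) : ℝ) * ψ1 n

/-- Layer-1 covariance of the incommensurate coupled chain Hamiltonian:
`H(b + x) = U¹_x H(b) (U¹_x)†`, where `U¹_x` shifts layer 1 by `x` and leaves
layer 2 unchanged. Componentwise: `((H(b+x)ψ)¹)_n = ((H(b)(U¹_{−x}ψ))¹)_{n−x}` and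
`((H(b+x)ψ)²)_m = ((H(b)(U¹_{−x}ψ))²)_m`, with `(U¹_{−x}ψ)¹_k = ψ¹_{k+x}`. -/
theorem Hchain_layer1_covariance (θ : ℝ) (hθ : θ ∈ Set.Ioo (0 : ℝ) 1)
    (h : ℝ → ℝ) (A B : ℝ) (hA : 0 < A) (hB : 0 < B)
    (hdecay : ∀ η : ℝ, |h η| ≤ A * Real.exp (-B * |η|))
    (x : ℤ) (b : ℝ) (ψ1 ψ2 : ℤ → ℂ)
    (hψ1 : (Function.support ψ1).Finite) (hψ2 : (Function.support ψ2).Finite)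
    (n m : ℤ) :
    Hchain1 θ h (b + x) ψ1 ψ2 n
        = Hchain1 θ h b (fun k => ψ1 (k + x)) ψ2 (n - x) ∧
    Hchain2 θ h (b + x) ψ1 ψ2 m
        = Hchain2 θ h b (fun k => ψ1 (k + x)) ψ2 m := by
  constructor
  · unfold Hchain1
    have h1 : n - x + 1 + x = n + 1 := by ring
    have h2 : n - x - 1 + x = n - 1 := by ring
    simp only [h1, h2]
    congr 1
    apply tsum_congr
    intro k
    congr 2
    push_cast
    ring
  · unfold Hchain2
    congr 1
    rw [← (Equiv.addRight x).tsum_eq]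
    apply tsum_congr
    intro k
    simp only [Equiv.coe_addRight]
    congr 2
    push_cast
    ring
end

section
/- Let θ ∈ (0,1) and let h : ℝ → ℝ satisfy |h(η)| ≤ A e^{−B|η|} for some constants A, B > 0. Then for every x ∈ ℤ and b ∈ ℝ, the incommensurate coupled chain Hamiltonian satisfies the layer-2 covariance relation H(b − (1−θ)x) = U²_x H(b) (U²_x)†: for every pair of finitely supported functions ψ = (ψ¹, ψ²) with ψ¹, ψ² : ℤ → ℂ and all n, m ∈ ℤ, ((H(b − (1−θ)x)ψ)¹)_n = ((H(b)(U²_{−x}ψ))¹)_n and ((H(b − (1−θ)x)ψ)²)_m = ((H(b)(U²_{−x}ψ))²)_{m−x}, where U²_x shifts the second component by x and leaves the first unchanged: ((U²_xψ)¹)_n = ψ¹_n, ((U²_xψ)²)_m = ψ²_{m−x}. -/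
/-- Layer-2 covariance of the incommensurate coupled chain Hamiltonian:
`H(b − (1−θ)x) = U²_x H(b) (U²_x)†`, where `U²_x` shifts layer 2 by `x` and leaves
layer 1 unchanged. Componentwise: `((H(b−(1−θ)x)ψ)¹)_n = ((H(b)(U²_{−x}ψ))¹)_n` and
`((H(b−(1−θ)x)ψ)²)_m = ((H(b)(U²_{−x}ψ))²)_{m−x}`, with `(U²_{−x}ψ)²_k = ψ²_{k+x}`. -/
theorem Hchain_layer2_covariance (θ : ℝ) (hθ : θ ∈ Set.Ioo (0 : ℝ) 1)
    (h : ℝ → ℝ) (A B : ℝ) (hA : 0 < A) (hB : 0 < B)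
    (hdecay : ∀ η : ℝ, |h η| ≤ A * Real.exp (-B * |η|))
    (x : ℤ) (b : ℝ) (ψ1 ψ2 : ℤ → ℂ)
    (hψ1 : (Function.support ψ1).Finite) (hψ2 : (Function.support ψ2).Finite)
    (n m : ℤ) :
    Hchain1 θ h (b - (1 - θ) * x) ψ1 ψ2 n
        = Hchain1 θ h b ψ1 (fun k => ψ2 (k + x)) n ∧
    Hchain2 θ h (b - (1 - θ) * x) ψ1 ψ2 m
        = Hchain2 θ h b ψ1 (fun k => ψ2 (k + x)) (m - x) := by
  constructor
  · unfold Hchain1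
    congr 1
    rw [← (Equiv.addRight x).tsum_eq
      (fun m : ℤ => (h ((n : ℝ) - (1 - θ) * (m : ℝ) - (b - (1 - θ) * x)) : ℝ) * ψ2 m)]
    apply tsum_congr
    intro k
    simp only [Equiv.coe_addRight]
    congr 2
    push_cast
    ring
  · unfold Hchain2
    have hm : (m : ℂ) + 1 = (m - x : ℤ) + x + 1 := by push_cast; ring
    congr 1
    · congr 1 <;> congr 1 <;> [skip; skip] <;> omega
    · apply tsum_congr
      intro k
      congr 2
      push_cast
      ring
end
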